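/- arXiv:1503.01545 — 2 statements merged into one kernel-verified Lean document; each statement's English description precedes it below -/
import Mathlib

section
/- Fix a prime p and r ≥ 1. Let g_p(m) be the number of tuples (s₁, …, s_r) of positive integers with s_j > p·s_{j+1} for all 1 ≤ j < r whose sum is m. Then the rate of growth of g_p is exactly r: there is K with g_p(m) ≤ K·m^{r−1} for all m, and for infinitely many m one has g_p(m) ≥ K'·m^{r−1} for some K' > 0. -/
/-!
Forgetting the first entry embeds the tuples of sum `m` into `{0, …, m}^(r-1)`, which gives
the upper bound. For the lower bound, take `s_i = (p+1)^(r-i) x + t_i` with arbitrary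
`0 ≤ t_i < x` for `i ≥ 1` and let `s_0` absorb the slack: the gaps between consecutive powers
of `p + 1` leave room for the chain condition, so the `x^(r-1)` choices of `(t_i)` all give
valid tuples with one common sum, a fixed multiple of `x`.
-/

open Finset

def inadmissibleSeqs (p r m : ℕ) : Set (Fin r → ℕ) :=
  {s | (∀ i, 1 ≤ s i) ∧
    (∀ (j : ℕ) (h : j + 1 < r), p * s ⟨j + 1, h⟩ < s ⟨j, Nat.lt_of_succ_lt h⟩) ∧
    ∑ i, s i = m}

lemma inadmissibleSeqs_finite (p r m : ℕ) : (inadmissibleSeqs p r m).Finite :=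
  (Finset.Nat.antidiagonalTuple r m).finite_toSet.subset fun _ hs =>
    Finset.Nat.mem_antidiagonalTuple.2 hs.2.2

instance (p r m : ℕ) : Finite (inadmissibleSeqs p r m) :=
  (inadmissibleSeqs_finite p r m).to_subtype

lemma injOn_tail_of_sum_eq (k m : ℕ) :
    Set.InjOn (fun s : Fin (k + 1) → ℕ => Fin.tail s) {s | ∑ i, s i = m} := by
  intro s hs t ht hst
  have htail : ∀ i : Fin k, s i.succ = t i.succ := congrFun hst
  have hsum : s 0 + ∑ i : Fin k, s i.succ = t 0 + ∑ i : Fin k, t i.succ := by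
    rw [← Fin.sum_univ_succ, ← Fin.sum_univ_succ, hs, ht]
  have h0 : s 0 = t 0 := by
    rw [Finset.sum_congr rfl fun i _ => htail i] at hsum
    omega
  exact funext <| Fin.cases h0 htail

lemma card_inadmissibleSeqs_le (p k m : ℕ) :
    Nat.card (inadmissibleSeqs p (k + 1) m) ≤ (m + 1) ^ k := by
  let f : inadmissibleSeqs p (k + 1) m → Fin k → Fin (m + 1) := fun s i =>
    ⟨s.1 i.succ, Nat.lt_succ_of_le <|
      (single_le_sum (fun _ _ => Nat.zero_le _) (mem_univ _)).trans_eq s.2.2.2⟩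
  have hf : Function.Injective f := fun s t hst =>
    Subtype.ext <| injOn_tail_of_sum_eq k m s.2.2.2 t.2.2.2 <|
      funext fun i => congrArg Fin.val (congrFun hst i)
  simpa using Nat.card_le_card_of_injective f hf

lemma mul_lt_pow_succ_of_pos (p : ℕ) {e : ℕ} (he : 0 < e) :
    p * ((p + 1) ^ e + 1) < (p + 1) ^ (e + 1) := by
  have : p + 1 ≤ (p + 1) ^ e := Nat.le_self_pow he.ne' _
  rw [pow_succ]
  nlinarith

lemma mul_add_lt_mul_add {p a b x u v : ℕ} (hab : p * (b + 1) < a) (hv : v < x) :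
    p * (b * x + v) < a * x + u := by
  nlinarith

def witness (p k x : ℕ) (t : Fin k → Fin x) : Fin (k + 1) → ℕ := fun i =>
  (p + 1) ^ (k + 1 - i) * x +
    (Fin.cons (k * x - ∑ j, (t j : ℕ)) (fun j => t j) : Fin (k + 1) → ℕ) i

def witnessScale (p k : ℕ) : ℕ := ∑ i : Fin (k + 1), (p + 1) ^ (k + 1 - i) + k

lemma witness_mem (p k x : ℕ) (hx : 1 ≤ x) (t : Fin k → Fin x) :
    witness p k x t ∈ inadmissibleSeqs p (k + 1) (witnessScale p k * x) := by
  refine ⟨fun i => ?_, fun j hj => ?_, ?_⟩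
  · have := Nat.mul_le_mul (Nat.one_le_pow (k + 1 - i) (p + 1) p.succ_pos) hx
    unfold witness; omega
  · have hsucc : (⟨j + 1, hj⟩ : Fin (k + 1)) = Fin.succ ⟨j, by omega⟩ := rfl
    have hexp : k + 1 - j = (k - j) + 1 := by omega
    simp only [witness, hsucc, Fin.cons_succ, Nat.add_sub_add_right, hexp]
    exact mul_add_lt_mul_add (mul_lt_pow_succ_of_pos p (by omega)) (t _).isLt
  · have hT : ∑ j, (t j : ℕ) ≤ k * x := by
      simpa using sum_le_sum fun j (_ : j ∈ univ) => (t j).isLt.le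
    simp only [witness, sum_add_distrib, Fin.sum_cons, ← sum_mul, witnessScale]
    rw [Nat.sub_add_cancel hT, add_mul]

lemma witness_injective (p k x : ℕ) : Function.Injective (witness p k x) := by
  intro t t' h
  funext j
  have := congrFun h j.succ
  simp only [witness, Fin.cons_succ] at this
  exact Fin.ext (by omega)

lemma pow_le_card_inadmissibleSeqs (p k x : ℕ) (hx : 1 ≤ x) :
    x ^ k ≤ Nat.card (inadmissibleSeqs p (k + 1) (witnessScale p k * x)) := by
  simpa using Nat.card_le_card_of_injective
    (fun t => (⟨witness p k x t, witness_mem p k x hx t⟩ : inadmissibleSeqs p (k + 1) _))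
    fun t t' h => witness_injective p k x (congrArg Subtype.val h)

theorem stmt15_general (p r : ℕ) (hr : 1 ≤ r)
    (g : ℕ → ℕ)
    (hg : ∀ m : ℕ, g m =
      Nat.card {s : Fin r → ℕ // (∀ i, 1 ≤ s i) ∧
        (∀ (j : ℕ) (h : j + 1 < r), p * s ⟨j + 1, h⟩ < s ⟨j, Nat.lt_of_succ_lt h⟩) ∧
        ∑ i, s i = m}) :
    (∃ K : ℕ, 0 < K ∧ ∀ m : ℕ, 1 ≤ m → g m ≤ K * m ^ (r - 1)) ∧
      ∃ K' : ℝ, 0 < K' ∧ {m : ℕ | K' * (m : ℝ) ^ (r - 1) ≤ (g m : ℝ)}.Infinite := by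
  obtain ⟨k, rfl⟩ : ∃ k, r = k + 1 := ⟨r - 1, by omega⟩
  replace hg : ∀ m, g m = Nat.card (inadmissibleSeqs p (k + 1) m) := hg
  simp only [Nat.add_sub_cancel]
  refine ⟨⟨2 ^ k, by positivity, fun m hm => ?_⟩, ?_⟩
  · calc g m ≤ (m + 1) ^ k := hg m ▸ card_inadmissibleSeqs_le p k m
      _ ≤ (2 * m) ^ k := Nat.pow_le_pow_left (by omega) k
      _ = 2 ^ k * m ^ k := mul_pow 2 m k
  · set M := witnessScale p k
    have hM : 0 < M := Nat.add_pos_left (sum_pos (fun _ _ => by positivity) univ_nonempty) k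
    refine ⟨1 / (M : ℝ) ^ k, by positivity, Set.infinite_of_injective_forall_mem
      (f := fun n : ℕ => M * (n + 1)) (fun a b hab => by simpa [hM.ne'] using hab) fun n => ?_⟩
    have hle : (n + 1) ^ k ≤ g (M * (n + 1)) :=
      hg _ ▸ pow_le_card_inadmissibleSeqs p k _ n.succ_pos
    have hMR : (M : ℝ) ^ k ≠ 0 := pow_ne_zero k (by exact_mod_cast hM.ne')
    simp only [Set.mem_ofPred_eq, Nat.cast_mul, mul_pow, one_div, inv_mul_cancel_left₀ hMR]
    exact_mod_cast hle

/-- The combinatorial core of `γ(H_•(Σ_{p^r}, Lie(p^r))) = r`: the counting function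
`g_p` of completely inadmissible exponent sequences of length `r` has rate of growth
exactly `r`: `g_p(m) ≤ K·m^{r−1}` for all `m ≥ 1`, and `g_p(m) ≥ K'·m^{r−1}` for
infinitely many `m`, for some `K' > 0`. -/
theorem stmt15 (p r : ℕ) (hp : p.Prime) (hr : 1 ≤ r)
    (g : ℕ → ℕ)
    (hg : ∀ m : ℕ, g m =
      Nat.card {s : Fin r → ℕ // (∀ i, 1 ≤ s i) ∧
        (∀ (j : ℕ) (h : j + 1 < r), p * s ⟨j + 1, h⟩ < s ⟨j, Nat.lt_of_succ_lt h⟩) ∧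
        ∑ i, s i = m}) :
    (∃ K : ℕ, 0 < K ∧ ∀ m : ℕ, 1 ≤ m → g m ≤ K * m ^ (r - 1)) ∧
      ∃ K' : ℝ, 0 < K' ∧ {m : ℕ | K' * (m : ℝ) ^ (r - 1) ≤ (g m : ℝ)}.Infinite :=
  stmt15_general p r hr g hg
end

section
/- Fix a prime p. Define f : ℕ → ℕ by f(r) = the rate of growth of the sequence m ↦ #{(s₁,…,s_r) ∈ (ℤ_{>0})^r : s_j > p·s_{j+1} for all j < r, Σ s_j = m} (with f(0) = 0, corresponding to the one-dimensional homology in degree 0). Then for any n ≥ 1 with p-adic valuation t, max_{0 ≤ r ≤ t} f(r) = t. -/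
open Finset

/-!
A tuple with `s j > p * s (j + 1)` is the same as the Horner tails `s j = ∑_{i ≥ j} p^(i-j) y i`
of a tuple `y` of positive integers. With the sum `m` fixed, the last coordinate is determined by
the others, so there are at most `m^(r-1)` such tuples of length `r`. Conversely, letting the `y`
of the last `r - 1` coordinates range over `[1, N]` and choosing `s 0` to bring the sum up to a
suitable multiple `C N` gives `N^(r-1)` of them. So the count grows exactly like `m^(r-1)`, and
its rate of growth is `r`.
-/
abbrev InadmissibleTuple (p r m : ℕ) : Type :=
  {s : Fin r → ℕ // (∀ i, 1 ≤ s i) ∧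
    (∀ (j : ℕ) (h : j + 1 < r), p * s ⟨j + 1, h⟩ < s ⟨j, Nat.lt_of_succ_lt h⟩) ∧ ∑ i, s i = m}

lemma eq_of_sum_eq_of_castSucc_eq {M : Type*} [AddCancelCommMonoid M] {q : ℕ}
    {s t : Fin (q + 1) → M} (hsum : ∑ i, s i = ∑ i, t i)
    (h : ∀ i : Fin q, s i.castSucc = t i.castSucc) : s = t := by
  have hlast : s (Fin.last q) = t (Fin.last q) := by
    simp only [Fin.sum_univ_castSucc, h] at hsum
    exact add_left_cancel hsum
  funext i
  induction i using Fin.lastCases with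
  | last => exact hlast
  | cast i => exact h i

namespace InadmissibleTuple

variable {p q r m : ℕ}

lemma le_sum (s : InadmissibleTuple p r m) (i : Fin r) : s.1 i ≤ m :=
  (single_le_sum (f := s.1) (fun _ _ => Nat.zero_le _) (mem_univ i)).trans_eq s.2.2.2

def code (s : InadmissibleTuple p (q + 1) m) (i : Fin q) : Fin m :=
  ⟨s.1 i.castSucc - 1, by have := s.le_sum i.castSucc; have := s.2.1 i.castSucc; omega⟩

lemma code_injective : (code : InadmissibleTuple p (q + 1) m → Fin q → Fin m).Injective := by
  intro s t hst
  refine Subtype.ext (eq_of_sum_eq_of_castSucc_eq (s.2.2.2.trans t.2.2.2.symm) fun i => ?_)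
  have := Fin.val_eq_of_eq (congr_fun hst i)
  have := s.2.1 i.castSucc
  have := t.2.1 i.castSucc
  simp only [code] at *
  omega

instance : Finite (InadmissibleTuple p (q + 1) m) := Finite.of_injective _ code_injective

end InadmissibleTuple

lemma card_inadmissibleTuple_le (p q m : ℕ) :
    Nat.card (InadmissibleTuple p (q + 1) m) ≤ m ^ q := by
  simpa using Nat.card_le_card_of_injective _ InadmissibleTuple.code_injective

section TailSum

variable (p q : ℕ) (y : ℕ → ℕ)

def tailSum (i : ℕ) : ℕ := ∑ j ∈ Ico i q, p ^ (j - i) * y j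

lemma tailSum_self : tailSum p q y q = 0 := by simp [tailSum]

lemma tailSum_eq_add {i : ℕ} (hi : i < q) :
    tailSum p q y i = y i + p * tailSum p q y (i + 1) := by
  rw [tailSum, sum_eq_sum_Ico_succ_bot hi, Nat.sub_self, pow_zero, one_mul, tailSum, mul_sum]
  congr 1
  refine sum_congr rfl fun j hj => ?_
  rw [show j - i = j - (i + 1) + 1 by grind, pow_succ]
  ring

lemma tailSum_le {B : ℕ} (hy : ∀ j, y j ≤ B) (i : ℕ) : tailSum p q y i ≤ q * (p + 1) ^ q * B :=
  calc tailSum p q y i ≤ ∑ _j ∈ Ico i q, (p + 1) ^ q * B := by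
        refine sum_le_sum fun j hj => Nat.mul_le_mul ?_ (hy j)
        calc p ^ (j - i) ≤ (p + 1) ^ (j - i) := Nat.pow_le_pow_left p.le_succ _
          _ ≤ (p + 1) ^ q := Nat.pow_le_pow_right p.succ_pos (by grind)
    _ = (q - i) * ((p + 1) ^ q * B) := by simp
    _ ≤ q * (p + 1) ^ q * B := by rw [mul_assoc]; exact Nat.mul_le_mul_right _ (Nat.sub_le q i)

lemma sum_tailSum_add_mul_le {B : ℕ} (hy : ∀ j, y j ≤ B) :
    ∑ i ∈ range q, tailSum p q y i + p * tailSum p q y 0 ≤ (q + p) * q * (p + 1) ^ q * B :=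
  calc ∑ i ∈ range q, tailSum p q y i + p * tailSum p q y 0
      ≤ ∑ _i ∈ range q, q * (p + 1) ^ q * B + p * (q * (p + 1) ^ q * B) :=
        add_le_add (sum_le_sum fun i _ => tailSum_le p q y hy i)
          (Nat.mul_le_mul_left p (tailSum_le p q y hy 0))
    _ = (q + p) * q * (p + 1) ^ q * B := by rw [sum_const, card_range, smul_eq_mul]; ring

variable {p q y}

lemma one_le_tailSum (hy : ∀ j < q, 1 ≤ y j) {i : ℕ} (hi : i < q) : 1 ≤ tailSum p q y i := by
  rw [tailSum_eq_add p q y hi]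
  exact Nat.le_add_right_of_le (hy i hi)

lemma mul_tailSum_succ_lt (hy : ∀ j < q, 1 ≤ y j) {i : ℕ} (hi : i < q) :
    p * tailSum p q y (i + 1) < tailSum p q y i := by
  rw [tailSum_eq_add p q y hi]
  exact Nat.lt_add_of_pos_left (hy i hi)

lemma eq_of_tailSum_eq {y' : ℕ → ℕ} (h : ∀ i < q, tailSum p q y i = tailSum p q y' i)
    {j : ℕ} (hj : j < q) : y j = y' j := by
  have h' (i : ℕ) (hi : i ≤ q) : tailSum p q y i = tailSum p q y' i := by
    rcases hi.lt_or_eq with hi | rfl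
    · exact h i hi
    · simp only [tailSum_self]
  have := h' j hj.le
  rwa [tailSum_eq_add p q y hj, tailSum_eq_add p q y' hj, h' (j + 1) hj,
    Nat.add_right_cancel_iff] at this

end TailSum

namespace InadmissibleTuple

def tailSumSeq (p q m : ℕ) (y : ℕ → ℕ) : ℕ → ℕ
  | 0 => m - ∑ i ∈ range q, tailSum p q y i
  | i + 1 => tailSum p q y i

variable {p r m : ℕ}

def ofSeq (u : ℕ → ℕ) (hpos : ∀ i < r, 1 ≤ u i)
    (hdec : ∀ j, j + 1 < r → p * u (j + 1) < u j) (hsum : ∑ i ∈ range r, u i = m) :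
    InadmissibleTuple p r m :=
  ⟨fun i => u i, fun i => hpos i i.2, fun j h => hdec j h,
    (Fin.sum_univ_eq_sum_range u r).trans hsum⟩

variable {q : ℕ} {y : ℕ → ℕ}

def ofTailSums (hy : ∀ j < q, 1 ≤ y j)
    (hm : ∑ i ∈ range q, tailSum p q y i + p * tailSum p q y 0 < m) :
    InadmissibleTuple p (q + 1) m := by
  refine ofSeq (tailSumSeq p q m y) (fun i hi => ?_) (fun j hj => ?_) ?_
  · cases i with
    | zero => simp only [tailSumSeq]; omega
    | succ i => exact one_le_tailSum hy (by omega)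
  · cases j with
    | zero => simp only [tailSumSeq]; omega
    | succ i => exact mul_tailSum_succ_lt hy (by omega)
  · rw [sum_range_succ']
    simp only [tailSumSeq]
    omega

lemma ofTailSums_apply_succ (hy : ∀ j < q, 1 ≤ y j)
    (hm : ∑ i ∈ range q, tailSum p q y i + p * tailSum p q y 0 < m) {i : ℕ} (hi : i < q) :
    (ofTailSums hy hm).1 ⟨i + 1, by omega⟩ = tailSum p q y i :=
  rfl

end InadmissibleTuple

lemma pow_le_card_inadmissibleTuple (p q N : ℕ) (hN : 1 ≤ N) :
    N ^ q ≤ Nat.card (InadmissibleTuple p (q + 1) (((q + p) * q * (p + 1) ^ q + 1) * N)) := by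
  let y (x : Fin q → Fin N) (j : ℕ) : ℕ := if h : j < q then x ⟨j, h⟩ + 1 else 0
  have hy_pos (x) (j) (hj : j < q) : 1 ≤ y x j := by simp [y, hj]
  have hy_le (x) (j) : y x j ≤ N := by by_cases hj : j < q <;> simp [y, hj]
  have hm (x) : ∑ i ∈ range q, tailSum p q (y x) i + p * tailSum p q (y x) 0 <
      ((q + p) * q * (p + 1) ^ q + 1) * N := by
    have := sum_tailSum_add_mul_le p q (y x) (hy_le x)
    rw [add_one_mul]
    omega
  let enc (x : Fin q → Fin N) := InadmissibleTuple.ofTailSums (hy_pos x) (hm x)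
  have henc : enc.Injective := by
    intro x x' h
    have hT (i : ℕ) (hi : i < q) : tailSum p q (y x) i = tailSum p q (y x') i := by
      rw [← InadmissibleTuple.ofTailSums_apply_succ (hy_pos x) (hm x) hi,
        ← InadmissibleTuple.ofTailSums_apply_succ (hy_pos x') (hm x') hi]
      exact congr_fun (congr_arg Subtype.val h) _
    funext i
    have := eq_of_tailSum_eq hT i.2
    simp only [y, dif_pos i.2, Fin.eta] at this
    exact Fin.ext (by omega)
  simpa using Nat.card_le_card_of_injective enc henc

lemma mul_mul_pow_lt_pow_succ (K C d : ℕ) :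
    K * (C * (K * C ^ d + 1)) ^ d < (K * C ^ d + 1) ^ (d + 1) := by
  rw [mul_pow, ← mul_assoc, pow_succ']
  exact Nat.mul_lt_mul_of_pos_right (Nat.lt_succ_self _) (by positivity)

lemma isLeast_growth_exponent {h : ℕ → ℕ} {q C : ℕ} (hC : 0 < C)
    (hupper : ∀ m, 1 ≤ m → h m ≤ m ^ q) (hlower : ∀ N, 1 ≤ N → N ^ q ≤ h (C * N)) :
    IsLeast {c : ℕ | 0 < c ∧ ∃ K : ℕ, 0 < K ∧ ∀ m : ℕ, 1 ≤ m → h m ≤ K * m ^ (c - 1)}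
      (q + 1) := by
  refine ⟨⟨q.succ_pos, 1, one_pos, fun m hm => by simpa using hupper m hm⟩, ?_⟩
  rintro (_ | d) ⟨hc, K, -, hK⟩
  · exact absurd hc (lt_irrefl 0)
  by_contra! hdq
  set N := K * C ^ d + 1
  have hbound : N ^ (d + 1) ≤ K * (C * N) ^ d :=
    calc N ^ (d + 1) ≤ N ^ q := Nat.pow_le_pow_right (Nat.succ_pos _) (by omega)
      _ ≤ h (C * N) := hlower N (Nat.le_add_left 1 _)
      _ ≤ K * (C * N) ^ d := hK _ (Nat.mul_pos hC (Nat.succ_pos _))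
  exact hbound.not_gt (mul_mul_pow_lt_pow_succ K C d)

theorem stmt19_general (p : ℕ)
    (g : ℕ → ℕ → ℕ)
    (hg : ∀ r m : ℕ, g r m =
      Nat.card {s : Fin r → ℕ // (∀ i, 1 ≤ s i) ∧
        (∀ (j : ℕ) (h : j + 1 < r), p * s ⟨j + 1, h⟩ < s ⟨j, Nat.lt_of_succ_lt h⟩) ∧
        ∑ i, s i = m})
    (f : ℕ → ℕ) (hf0 : f 0 = 0)
    (hf : ∀ r : ℕ, 1 ≤ r →
      IsLeast {c : ℕ | 0 < c ∧ ∃ K : ℕ, 0 < K ∧ ∀ m : ℕ, 1 ≤ m → g r m ≤ K * m ^ (c - 1)} (f r)) :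
    ∀ n : ℕ, 1 ≤ n → (Finset.range (padicValNat p n + 1)).sup f = padicValNat p n := by
  have hf_eq : ∀ r, f r = r := by
    rintro (_ | q)
    · exact hf0
    · exact (hf (q + 1) q.succ_pos).unique <|
        isLeast_growth_exponent (C := (q + p) * q * (p + 1) ^ q + 1) (Nat.succ_pos _)
          (fun m _ => (hg _ m).trans_le (card_inadmissibleTuple_le p q m))
          (fun N hN => (pow_le_card_inadmissibleTuple p q N hN).trans_eq (hg _ _).symm)
  intro n _
  refine le_antisymm (Finset.sup_le fun r hr => ?_) ?_
  · rw [hf_eq]; exact Nat.lt_succ_iff.mp (mem_range.mp hr)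
  · exact (hf_eq _).symm.trans_le (le_sup (mem_range.mpr (Nat.lt_succ_self _)))

/-- Let `f r` be the rate of growth of the sequence counting completely inadmissible
exponent tuples of length `r` (with `f 0 = 0`).  Then `f r = r` for every `r`, and
consequently for any `n ≥ 1` with `p`-adic valuation `t` we have
`max_{0 ≤ r ≤ t} f(r) = t` — the Erdmann–Lim–Tan conjecture
`c_{Σ_n}(Lie(n)) = t` follows. -/
theorem stmt19 (p : ℕ) (hp : p.Prime)
    (g : ℕ → ℕ → ℕ)
    (hg : ∀ r m : ℕ, g r m =
      Nat.card {s : Fin r → ℕ // (∀ i, 1 ≤ s i) ∧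
        (∀ (j : ℕ) (h : j + 1 < r), p * s ⟨j + 1, h⟩ < s ⟨j, Nat.lt_of_succ_lt h⟩) ∧
        ∑ i, s i = m})
    (f : ℕ → ℕ) (hf0 : f 0 = 0)
    (hf : ∀ r : ℕ, 1 ≤ r →
      IsLeast {c : ℕ | 0 < c ∧ ∃ K : ℕ, 0 < K ∧ ∀ m : ℕ, 1 ≤ m → g r m ≤ K * m ^ (c - 1)} (f r)) :
    ∀ n : ℕ, 1 ≤ n → (Finset.range (padicValNat p n + 1)).sup f = padicValNat p n :=
  stmt19_general p g hg f hf0 hf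
end
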